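/- arXiv:1511.09389 — 3 statements merged into one kernel-verified Lean document; each statement's English description precedes it below -/
import Mathlib

section
/- Let 𝒮 be a class of hypergraphs that is closed under isomorphism and closed under adding twins. Then for every m ∈ ℕ there exists a number ψ(m) ∈ ℕ such that for every hypergraph H = (V, ℰ) with exactly m hyperedges and every vertex v ∈ V whose twin class contains more than ψ(m) vertices, we have H ∈ 𝒮 if and only if the hypergraph obtained from H by deleting v is in 𝒮. -/
/-- A (raw) hypergraph: a finite vertex set `V ⊆ ℕ` together with a finite
family of hyperedges. Validity (edges being nonempty subsets of `V`) is
captured by the predicate `FinHypergraph.Legal`. -/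
structure FinHypergraph where
  V : Finset ℕ
  E : Finset (Finset ℕ)

namespace FinHypergraph

/-- `H` is a legal hypergraph: every hyperedge is a nonempty subset of the
vertex set (hyperedges of size one are allowed). -/
def Legal (H : FinHypergraph) : Prop :=
  ∀ F ∈ H.E, F ⊆ H.V ∧ F.Nonempty

/-- `ℰ(v)`: the set of hyperedges incident with `v`. -/
def edgesAt (H : FinHypergraph) (v : ℕ) : Finset (Finset ℕ) :=
  H.E.filter (fun F => v ∈ F)

/-- The twin class of `v`: all vertices `u ∈ V` with `ℰ(u) = ℰ(v)`. -/
def twinClass (H : FinHypergraph) (v : ℕ) : Finset ℕ :=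
  H.V.filter (fun u => H.edgesAt u = H.edgesAt v)

/-- The hypergraph obtained from `H` by deleting the vertex `v`:
`(V ∖ {v}, {F ∖ {v} : F ∈ ℰ})`. -/
def delete (H : FinHypergraph) (v : ℕ) : FinHypergraph where
  V := H.V.erase v
  E := H.E.image (fun F => F.erase v)

/-- The hypergraph obtained from `H` by adding the new vertex `v'` as a twin of
`v`: `(V ∪ {v'}, {F ∪ {v'} : F ∈ ℰ, v ∈ F} ∪ {F ∈ ℰ : v ∉ F})`. -/
def addTwin (H : FinHypergraph) (v v' : ℕ) : FinHypergraph where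
  V := insert v' H.V
  E := H.E.image (fun F => if v ∈ F then insert v' F else F)

/-- `H` and `H'` are isomorphic: some bijection between their vertex sets maps
the hyperedge family of `H` onto that of `H'`. -/
def Isomorphic (H H' : FinHypergraph) : Prop :=
  ∃ f : ℕ → ℕ, Set.BijOn f (H.V : Set ℕ) (H'.V : Set ℕ) ∧
    H.E.image (fun F => F.image f) = H'.E

end FinHypergraph

/-!
List the hyperedges as `e : Fin m → Finset ℕ`; every vertex then has a type `A ⊆ Fin m`, and a
hypergraph is determined up to isomorphism by how many vertices it has of each type. Adding a twin
raises one of these counts by one, so if `K ∈ S` and the count vector of `L` dominates that of `K`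
with the same support, then `L ∈ S`. By Dickson's lemma the count vectors of members of `S` with a
given support dominate one of finitely many minimal ones, and `ψ(m)` bounds their entries. If the
twin class of `v ∈ H ∈ S` has more than `ψ(m)` vertices, then `H - v` still dominates a minimal
vector, so `H - v ∈ S`; conversely `H` is `H - v` with `v` added back as a twin.
-/

open Finset

lemma Finset.exists_image_univ_eq {α : Type*} [DecidableEq α] {s : Finset α} {m : ℕ}
    (h : #s = m) : ∃ e : Fin m → α, univ.image e = s := by
  refine ⟨fun a => (s.equivFinOfCardEq h).symm a, ?_⟩
  ext x
  simp only [mem_image, mem_univ, true_and]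
  refine ⟨fun ⟨a, ha⟩ => ha ▸ coe_mem _, fun hx => ⟨s.equivFinOfCardEq h ⟨x, hx⟩, by simp⟩⟩

theorem exists_bijOn_of_card_fiber_eq {α γ β : Type*} [Nonempty γ] [DecidableEq β]
    {s : Finset α} {t : Finset γ} {p : α → β} {q : γ → β}
    (h : ∀ b, #{x ∈ s | p x = b} = #{y ∈ t | q y = b}) :
    ∃ f : α → γ, Set.BijOn f s t ∧ ∀ x ∈ s, q (f x) = p x := by
  classical
  have hfiber : ∀ b, {x : s // p x = b} ≃ {y : t // q y = b} := fun b =>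
    Fintype.equivOfCardEq (by
      rw [Fintype.card_subtype, Fintype.card_subtype, univ_eq_attach, univ_eq_attach,
        filter_attach (p · = b), filter_attach (q · = b), card_map, card_map, card_attach,
        card_attach, h])
  set E : s ≃ t := Equiv.ofFiberEquiv hfiber
  have hE : ∀ x : s, q (E x) = p x := Equiv.ofFiberEquiv_map hfiber
  refine ⟨fun x => if hx : x ∈ s then E ⟨x, hx⟩ else Classical.arbitrary γ, ⟨?_, ?_, ?_⟩, ?_⟩
  · intro x hx
    simp [Finset.mem_coe.1 hx]
  · intro x hx y hy hxy
    simpa [Finset.mem_coe.1 hx, Finset.mem_coe.1 hy, Subtype.val_inj] using hxy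
  · intro y hy
    exact ⟨E.symm ⟨y, hy⟩, (E.symm ⟨y, hy⟩).2, by simp⟩
  · intro x hx
    simpa [hx] using hE ⟨x, hx⟩

theorem exists_bounded_le_same_support {ι : Type*} [Fintype ι]
    (P : (ι → ℕ) → Prop) :
    ∃ ψ : ℕ, ∀ c, P c → ∃ b, P b ∧ b ≤ c ∧ (∀ i, b i = 0 ↔ c i = 0) ∧ ∀ i, b i ≤ ψ := by
  -- within each support the minimal elements form an antichain, hence are finitely many
  let U : Finset ι → Set (ι → ℕ) := fun σ => {b | P b ∧ ∀ i, b i = 0 ↔ i ∉ σ}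
  have hfin : ∀ σ, {b | Minimal (· ∈ U σ) b}.Finite := fun σ =>
    (setOfPred_minimal_antichain _).finite_of_partiallyWellOrderedOn
      ((Set.isPWO_of_wellQuasiOrderedLE (U σ)).mono fun _ hb => hb.prop)
  refine ⟨univ.sup fun σ => (hfin σ).toFinset.sup fun b => univ.sup b, fun c hc => ?_⟩
  let σ : Finset ι := {i | c i ≠ 0}
  obtain ⟨b, hbc, hmin⟩ := (Set.isPWO_of_wellQuasiOrderedLE (U σ)).exists_le_minimal
    (a := c) ⟨hc, by simp [σ]⟩
  refine ⟨b, hmin.prop.1, hbc, fun i => by rw [hmin.prop.2 i]; simp [σ], fun i => ?_⟩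
  calc b i ≤ univ.sup b := le_sup (mem_univ i)
    _ ≤ (hfin σ).toFinset.sup fun b => univ.sup b :=
        le_sup (f := fun b => univ.sup b) ((hfin σ).mem_toFinset.2 hmin)
    _ ≤ _ := le_sup (f := fun σ => (hfin σ).toFinset.sup fun b => univ.sup b) (mem_univ σ)

attribute [ext] FinHypergraph

namespace FinHypergraph

variable {m : ℕ}

def vertexType (e : Fin m → Finset ℕ) (x : ℕ) : Finset (Fin m) := {a | x ∈ e a}

@[simp]
lemma mem_vertexType {e : Fin m → Finset ℕ} {x : ℕ} {a : Fin m} :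
    a ∈ vertexType e x ↔ x ∈ e a := by
  simp [vertexType]

@[simp]
lemma mem_edgesAt {H : FinHypergraph} {v : ℕ} {F : Finset ℕ} :
    F ∈ H.edgesAt v ↔ F ∈ H.E ∧ v ∈ F := by
  simp [edgesAt]

def typeCount (H : FinHypergraph) (e : Fin m → Finset ℕ) (A : Finset (Fin m)) : ℕ :=
  #{x ∈ H.V | vertexType e x = A}

section EdgeList

variable {H H' : FinHypergraph} {e e' : Fin m → Finset ℕ}

lemma mem_E_of_image_eq (he : univ.image e = H.E) (a : Fin m) : e a ∈ H.E :=
  he ▸ mem_image_of_mem e (mem_univ a)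

lemma vertexType_eq_iff (he : univ.image e = H.E) {x y : ℕ} :
    vertexType e x = vertexType e y ↔ H.edgesAt x = H.edgesAt y := by
  constructor
  · intro h
    ext F
    simp only [mem_edgesAt, ← he, mem_image, mem_univ, true_and]
    constructor <;> rintro ⟨⟨a, rfl⟩, hF⟩
    · exact ⟨⟨a, rfl⟩, mem_vertexType.1 (h ▸ mem_vertexType.2 hF)⟩
    · exact ⟨⟨a, rfl⟩, mem_vertexType.1 (h.symm ▸ mem_vertexType.2 hF)⟩
  · intro h
    ext a
    simpa [mem_edgesAt, mem_E_of_image_eq he a] using congrArg (e a ∈ ·) h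

lemma typeCount_vertexType (he : univ.image e = H.E) (v : ℕ) :
    H.typeCount e (vertexType e v) = #(H.twinClass v) := by
  simp only [typeCount, twinClass, vertexType_eq_iff he]

lemma eq_filter_vertexType (hL : H.Legal) (he : univ.image e = H.E) (a : Fin m) :
    e a = {x ∈ H.V | a ∈ vertexType e x} := by
  ext x
  simpa using fun hx => (hL _ (mem_E_of_image_eq he a)).1 hx

lemma isomorphic_of_typeCount_eq (hL : H.Legal) (hL' : H'.Legal) (he : univ.image e = H.E)
    (he' : univ.image e' = H'.E) (h : H.typeCount e = H'.typeCount e') : H.Isomorphic H' := by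
  obtain ⟨f, hf, hfType⟩ := exists_bijOn_of_card_fiber_eq (congrFun h)
  refine ⟨f, hf, ?_⟩
  have himage : ∀ a, (e a).image f = e' a := by
    intro a
    rw [eq_filter_vertexType hL he, eq_filter_vertexType hL' he']
    ext y
    simp only [mem_image, mem_filter]
    constructor
    · rintro ⟨x, ⟨hx, ha⟩, rfl⟩
      exact ⟨hf.mapsTo hx, hfType x hx ▸ ha⟩
    · rintro ⟨hy, ha⟩
      obtain ⟨x, hx, rfl⟩ := hf.surjOn hy
      exact ⟨x, ⟨hx, hfType x hx ▸ ha⟩, rfl⟩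
  rw [← he, ← he', image_image]
  exact image_congr fun a _ => himage a

end EdgeList

section AddTwin

variable {H : FinHypergraph} {e : Fin m → Finset ℕ} {v v' : ℕ}

lemma image_addTwin (he : univ.image e = H.E) :
    univ.image (fun a => if v ∈ e a then insert v' (e a) else e a) = (H.addTwin v v').E := by
  rw [addTwin, ← he, image_image]
  rfl

lemma vertexType_addTwin_of_ne {x : ℕ} (hx : x ≠ v') :
    vertexType (fun a => if v ∈ e a then insert v' (e a) else e a) x = vertexType e x := by
  ext a
  simp only [mem_vertexType]
  split_ifs <;> simp [*]

lemma vertexType_addTwin_new (hL : H.Legal) (he : univ.image e = H.E) (hv' : v' ∉ H.V) :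
    vertexType (fun a => if v ∈ e a then insert v' (e a) else e a) v' = vertexType e v := by
  ext a
  have hv'a : v' ∉ e a := fun h => hv' ((hL _ (mem_E_of_image_eq he a)).1 h)
  simp only [mem_vertexType]
  split_ifs <;> simp [*]

lemma typeCount_addTwin (hL : H.Legal) (he : univ.image e = H.E) (hv' : v' ∉ H.V)
    (A : Finset (Fin m)) :
    (H.addTwin v v').typeCount (fun a => if v ∈ e a then insert v' (e a) else e a) A =
      H.typeCount e A + if vertexType e v = A then 1 else 0 := by
  have hold : {x ∈ H.V | vertexType (fun a => if v ∈ e a then insert v' (e a) else e a) x = A} =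
      {x ∈ H.V | vertexType e x = A} :=
    filter_congr fun x hx => by rw [vertexType_addTwin_of_ne (ne_of_mem_of_not_mem hx hv')]
  rw [typeCount, addTwin, filter_insert, vertexType_addTwin_new hL he hv', hold, typeCount]
  split_ifs
  · exact card_insert_of_notMem fun h => hv' (mem_filter.1 h).1
  · rfl

lemma Legal.addTwin (hL : H.Legal) : (H.addTwin v v').Legal := by
  simp only [Legal, FinHypergraph.addTwin, mem_image]
  rintro _ ⟨F, hF, rfl⟩
  obtain ⟨hFV, hFne⟩ := hL F hF
  split_ifs
  · exact ⟨insert_subset_insert v' hFV, insert_nonempty v' F⟩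
  · exact ⟨hFV.trans (subset_insert v' H.V), hFne⟩

end AddTwin

section Delete

variable {H : FinHypergraph} {e : Fin m → Finset ℕ} {u v : ℕ}

lemma image_delete (he : univ.image e = H.E) :
    univ.image (fun a => (e a).erase v) = (H.delete v).E := by
  rw [delete, ← he, image_image]
  rfl

lemma vertexType_delete_of_ne {x : ℕ} (hx : x ≠ v) :
    vertexType (fun a => (e a).erase v) x = vertexType e x := by
  ext a
  simp [hx]

lemma typeCount_delete (hv : v ∈ H.V) (A : Finset (Fin m)) :
    H.typeCount e A =
      (H.delete v).typeCount (fun a => (e a).erase v) A + if vertexType e v = A then 1 else 0 := by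
  have hrest : {x ∈ H.V.erase v | vertexType (fun a => (e a).erase v) x = A} =
      {x ∈ H.V | vertexType e x = A}.erase v := by
    rw [← filter_erase]
    exact filter_congr fun x hx => by rw [vertexType_delete_of_ne (ne_of_mem_erase hx)]
  rw [typeCount, typeCount, delete, hrest]
  split_ifs with h
  · exact (card_erase_add_one (mem_filter.2 ⟨hv, h⟩)).symm
  · rw [add_zero, erase_eq_of_notMem]
    exact fun hmem => h (mem_filter.1 hmem).2

lemma mem_iff_mem_of_edgesAt_eq (h : H.edgesAt u = H.edgesAt v) {F : Finset ℕ} (hF : F ∈ H.E) :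
    u ∈ F ↔ v ∈ F := by
  simpa [hF] using congrArg (F ∈ ·) h

lemma Legal.delete (hL : H.Legal) (huv : u ≠ v) (h : H.edgesAt u = H.edgesAt v) :
    (H.delete v).Legal := by
  simp only [Legal, FinHypergraph.delete, mem_image]
  rintro _ ⟨F, hF, rfl⟩
  obtain ⟨hFV, hFne⟩ := hL F hF
  refine ⟨erase_subset_erase v hFV, ?_⟩
  by_cases hvF : v ∈ F
  · exact ⟨u, mem_erase.2 ⟨huv, (mem_iff_mem_of_edgesAt_eq h hF).2 hvF⟩⟩
  · rwa [erase_eq_of_notMem hvF]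

lemma addTwin_delete (hv : v ∈ H.V) (huv : u ≠ v) (h : H.edgesAt u = H.edgesAt v) :
    (H.delete v).addTwin u v = H := by
  ext1
  · exact insert_erase hv
  · rw [addTwin, delete, image_image]
    refine (image_congr fun F hF => ?_).trans image_id
    by_cases hvF : v ∈ F
    · simp [huv, (mem_iff_mem_of_edgesAt_eq h hF).2 hvF, insert_erase hvF]
    · simp [erase_eq_of_notMem hvF, mt (mem_iff_mem_of_edgesAt_eq h hF).1 hvF]

end Delete

section TwinClosed

variable {S : Set FinHypergraph}

lemma mem_of_delete_mem
    (hStwin : ∀ H ∈ S, ∀ v ∈ H.V, ∀ v' : ℕ, v' ∉ H.V → H.addTwin v v' ∈ S)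
    {H : FinHypergraph} {u v : ℕ} (hu : u ∈ H.V) (hv : v ∈ H.V) (huv : u ≠ v)
    (h : H.edgesAt u = H.edgesAt v) (hdel : H.delete v ∈ S) : H ∈ S := by
  simpa [addTwin_delete hv huv h] using
    hStwin _ hdel u (mem_erase.2 ⟨huv, hu⟩) v (notMem_erase v H.V)

lemma mem_of_typeCount_le
    (hSiso : ∀ H ∈ S, ∀ H' : FinHypergraph, H'.Legal → H.Isomorphic H' → H' ∈ S)
    (hStwin : ∀ H ∈ S, ∀ v ∈ H.V, ∀ v' : ℕ, v' ∉ H.V → H.addTwin v v' ∈ S)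
    {K L : FinHypergraph} {eK eL : Fin m → Finset ℕ} (hKS : K ∈ S) (hK : K.Legal)
    (hL : L.Legal) (heK : univ.image eK = K.E) (heL : univ.image eL = L.E)
    (hle : K.typeCount eK ≤ L.typeCount eL)
    (hsupp : ∀ A, L.typeCount eL A ≠ 0 → K.typeCount eK A ≠ 0) : L ∈ S := by
  induction hn : ∑ A, (L.typeCount eL A - K.typeCount eK A) using Nat.strong_induction_on
    generalizing K eK with
  | _ n ih =>
  -- add to `K` a twin of a vertex whose type is under-represented; the total deficit drops
  by_cases heq : K.typeCount eK = L.typeCount eL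
  · exact hSiso K hKS L hL (isomorphic_of_typeCount_eq hK hL heK heL heq)
  obtain ⟨A, hA⟩ : ∃ A, K.typeCount eK A < L.typeCount eL A := by
    by_contra! hge
    exact heq (le_antisymm hle hge)
  obtain ⟨x, hx⟩ : ({x ∈ K.V | vertexType eK x = A}).Nonempty :=
    card_ne_zero.1 (hsupp A (by omega))
  rw [mem_filter] at hx
  obtain ⟨x', hx'⟩ := Infinite.exists_notMem_finset K.V
  have hcount := typeCount_addTwin (v := x) hK heK hx'
  refine ih _ ?_ (hStwin K hKS x hx.1 x' hx') hK.addTwin (image_addTwin heK) (fun B => ?_)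
    (fun B hB => by rw [hcount]; have := hsupp B hB; omega) rfl
  · rw [← hn]
    refine sum_lt_sum (fun B _ => by rw [hcount]; omega) ⟨A, mem_univ A, ?_⟩
    rw [hcount, if_pos hx.2]
    omega
  · rw [hcount]
    split_ifs with hB
    · subst hB
      rw [hx.2]
      exact hA
    · simpa using hle B

lemma delete_mem_of_typeCount_lt
    (hSiso : ∀ H ∈ S, ∀ H' : FinHypergraph, H'.Legal → H.Isomorphic H' → H' ∈ S)
    (hStwin : ∀ H ∈ S, ∀ v ∈ H.V, ∀ v' : ℕ, v' ∉ H.V → H.addTwin v v' ∈ S)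
    {K L : FinHypergraph} {eK eL : Fin m → Finset ℕ} (hKS : K ∈ S) (hK : K.Legal)
    (hL : L.Legal) (heK : univ.image eK = K.E) (heL : univ.image eL = L.E)
    {u v : ℕ} (hv : v ∈ L.V) (huv : u ≠ v) (h : L.edgesAt u = L.edgesAt v)
    (hle : K.typeCount eK ≤ L.typeCount eL)
    (hsupp : ∀ A, L.typeCount eL A ≠ 0 → K.typeCount eK A ≠ 0)
    (hlt : K.typeCount eK (vertexType eL v) < L.typeCount eL (vertexType eL v)) :
    L.delete v ∈ S := by
  have hcount := typeCount_delete (e := eL) hv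
  refine mem_of_typeCount_le hSiso hStwin hKS hK (hL.delete huv h) heK (image_delete heL)
    (fun A => ?_) (fun A hA => hsupp A ?_)
  · have hleA := hle A
    rw [hcount] at hleA
    split_ifs at hleA with hA
    · subst hA
      rw [hcount, if_pos rfl] at hlt
      exact Nat.lt_succ_iff.1 hlt
    · simpa using hleA
  · rw [hcount]
    omega

end TwinClosed

end FinHypergraph

open FinHypergraph

theorem twin_truncation_for_twin_closed_classes_general
    (S : Set FinHypergraph)
    (hSiso : ∀ H ∈ S, ∀ H' : FinHypergraph, H'.Legal → H.Isomorphic H' → H' ∈ S)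
    (hStwin : ∀ H ∈ S, ∀ v ∈ H.V, ∀ v' : ℕ, v' ∉ H.V → H.addTwin v v' ∈ S) :
    ∀ m : ℕ, ∃ ψ : ℕ, ∀ H : FinHypergraph, H.Legal → H.E.card = m →
      ∀ v ∈ H.V, ψ < (H.twinClass v).card → (H ∈ S ↔ H.delete v ∈ S) := by
  intro m
  obtain ⟨ψ, hψ⟩ := exists_bounded_le_same_support fun c : Finset (Fin m) → ℕ =>
    ∃ K ∈ S, K.Legal ∧ ∃ e : Fin m → Finset ℕ, univ.image e = K.E ∧ K.typeCount e = c
  refine ⟨ψ + 1, fun H hH hm v hv hψv => ?_⟩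
  obtain ⟨u, hu, huv⟩ := exists_mem_ne (by omega : 1 < #(H.twinClass v)) v
  obtain ⟨hu, htwin⟩ := mem_filter.1 hu
  refine ⟨fun hHS => ?_, mem_of_delete_mem hStwin hu hv huv htwin⟩
  obtain ⟨e, he⟩ := Finset.exists_image_univ_eq hm
  obtain ⟨_, ⟨K, hKS, hK, eK, heK, rfl⟩, hle, hsupp, hbound⟩ := hψ _ ⟨H, hHS, hH, e, he, rfl⟩
  refine delete_mem_of_typeCount_lt hSiso hStwin hKS hK hH heK he hv huv htwin hle
    (fun A => (hsupp A).not.2) ?_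
  rw [typeCount_vertexType he]
  exact (hbound _).trans_lt (by omega)

/-- Let `S` be a class of hypergraphs closed under isomorphism and
under adding twins. Then for every `m` there is `ψ(m)` such that for every
hypergraph `H` with exactly `m` hyperedges and every vertex `v` whose twin
class has more than `ψ(m)` vertices, `H ∈ S` iff `H − v ∈ S`. -/
theorem twin_truncation_for_twin_closed_classes
    (S : Set FinHypergraph)
    (hSlegal : ∀ H ∈ S, H.Legal)
    (hSiso : ∀ H ∈ S, ∀ H' : FinHypergraph, H'.Legal → H.Isomorphic H' → H' ∈ S)
    (hStwin : ∀ H ∈ S, ∀ v ∈ H.V, ∀ v' : ℕ, v' ∉ H.V → H.addTwin v v' ∈ S) :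
    ∀ m : ℕ, ∃ ψ : ℕ, ∀ H : FinHypergraph, H.Legal → H.E.card = m →
      ∀ v ∈ H.V, ψ < (H.twinClass v).card → (H ∈ S ↔ H.delete v ∈ S) :=
  twin_truncation_for_twin_closed_classes_general S hSiso hStwin
end

section
/- Let k ∈ ℕ and let S be a set of functions x : Fin k → ℕ that is upward closed with respect to the pointwise order, i.e., whenever x ∈ S and x i ≤ y i for all i ∈ Fin k, then y ∈ S. Then there exists N ∈ ℕ such that for every x : Fin k → ℕ we have x ∈ S if and only if the pointwise truncation (fun i => min (x i) N) is in S. -/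
/-!
An upward-closed set is the upward closure of its minimal elements. By Dickson's lemma
`Fin k → ℕ` is well-quasi-ordered, so these minimal elements form a finite antichain, and any
`N` bounding all their coordinates works: every `x ∈ S` lies above a minimal `m`, which then also
lies below the truncation of `x` at `N`.
-/

section
variable {α : Type*}

theorem finite_setOf_minimal_mem [PartialOrder α] [WellQuasiOrderedLE α] (s : Set α) :
    {x | Minimal (· ∈ s) x}.Finite :=
  WellQuasiOrderedLE.finite_of_isAntichain (setOfPred_minimal_antichain _)

theorem IsUpperSet.inf_mem_iff [SemilatticeInf α] [WellFoundedLT α] {s : Set α}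
    (hs : IsUpperSet s) {c : α} (hc : c ∈ upperBounds {x | Minimal (· ∈ s) x}) (x : α) :
    x ⊓ c ∈ s ↔ x ∈ s := by
  refine ⟨fun h => hs inf_le_left h, fun hx => ?_⟩
  obtain ⟨m, hmx, hm⟩ := exists_minimal_le_of_wellFoundedLT (· ∈ s) x hx
  exact hs (le_inf hmx (hc hm)) hm.prop

end

/-- For every upward-closed set `S` of functions `Fin k → ℕ`
(with respect to the pointwise order), there is an `N` such that membership in
`S` is unaffected by truncating all values at `N`. -/
theorem upward_closed_truncation (k : ℕ) (S : Set (Fin k → ℕ))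
    (hS : ∀ x ∈ S, ∀ y : Fin k → ℕ, (∀ i : Fin k, x i ≤ y i) → y ∈ S) :
    ∃ N : ℕ, ∀ x : Fin k → ℕ, x ∈ S ↔ (fun i => min (x i) N) ∈ S := by
  have hup : IsUpperSet S := fun x y hxy hx => hS x hx y hxy
  obtain ⟨b, hb⟩ := (finite_setOf_minimal_mem S).bddAbove
  have hN : (fun _ => Finset.univ.sup b) ∈ upperBounds {x | Minimal (· ∈ S) x} :=
    fun m hm i => (hb hm i).trans (Finset.le_sup (Finset.mem_univ i))
  exact ⟨Finset.univ.sup b, fun x => (hup.inf_mem_iff hN x).symm⟩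
end

section
/- Let H = (V, ℰ) be a hypergraph and let u, v ∈ V be distinct twins of H. If G is a support for H − v with vertex set V ∖ {v}, then the graph on vertex set V obtained from G by adding v together with the single edge {v, u} is a support for H. -/
/-!
Every hyperedge `F` of `H` that avoids `v` is a hyperedge of `H − v`, so it stays connected. If
`v ∈ F`, then `u ∈ F` as well because `u` and `v` are twins; `F ∖ {v}` is either a hyperedge of
`H − v` or the singleton `{u}`, so it induces a connected graph in `G`, and the pendant edge
`{v, u}` attaches `v` to it.
-/

/-- A hypergraph: a finite vertex set `V ⊆ ℕ` together with a finite family of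
hyperedges, each a subset of `V` of size at least 2. -/
structure NatHypergraph where
  V : Finset ℕ
  E : Finset (Finset ℕ)
  edge_sub : ∀ F ∈ E, F ⊆ V
  edge_card : ∀ F ∈ E, 2 ≤ F.card

namespace NatHypergraph

/-- `ℰ(v)`: the set of hyperedges incident with `v`. -/
def edgesAt (H : NatHypergraph) (v : ℕ) : Finset (Finset ℕ) :=
  H.E.filter (fun F => v ∈ F)

/-- `w` covers `v` if `ℰ(v) ⊆ ℰ(w)`. -/
def Covers (H : NatHypergraph) (w v : ℕ) : Prop :=
  H.edgesAt v ⊆ H.edgesAt w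

/-- `u` and `v` are twins if `ℰ(u) = ℰ(v)`. -/
def AreTwins (H : NatHypergraph) (u v : ℕ) : Prop :=
  H.edgesAt u = H.edgesAt v

/-- The twin class of `v`: all vertices with the same incident hyperedges as `v`. -/
def twinClass (H : NatHypergraph) (v : ℕ) : Finset ℕ :=
  H.V.filter (fun u => H.edgesAt u = H.edgesAt v)

/-- `H − v`: delete vertex `v`, removing it from every hyperedge and discarding
   the resulting sets of size less than 2. -/
def delete (H : NatHypergraph) (v : ℕ) : NatHypergraph where
  V := H.V.erase v
  E := (H.E.image (fun F => F.erase v)).filter (fun F => 2 ≤ F.card)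
  edge_sub := by
    intro F hF
    simp only [Finset.mem_filter, Finset.mem_image] at hF
    obtain ⟨⟨F₀, hF₀, rfl⟩, -⟩ := hF
    intro x hx
    exact Finset.mem_erase.mpr ⟨(Finset.mem_erase.mp hx).1,
      H.edge_sub F₀ hF₀ (Finset.mem_erase.mp hx).2⟩
  edge_card := fun F hF => (Finset.mem_filter.mp hF).2

end NatHypergraph

/-- All edges of the graph `G` have both endpoints in `W`
    (i.e. `G` is a graph on the vertex set `W`). -/
def EdgesWithin (G : SimpleGraph ℕ) (W : Finset ℕ) : Prop :=
  ∀ a b, G.Adj a b → a ∈ W ∧ b ∈ W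

/-- `G` is a support for `H`: a graph on the vertex set of `H` in which every
    hyperedge induces a connected subgraph. -/
def IsSupport (H : NatHypergraph) (G : SimpleGraph ℕ) : Prop :=
  EdgesWithin G H.V ∧ ∀ F ∈ H.E, ((G.induce (F : Set ℕ)).Connected)

/-- `G` is a representative support for `H` with vertex set `W ⊆ H.V`:
    (i) every hyperedge `F` with `|F ∩ W| ≥ 2` induces (on `F ∩ W`) a connected
    subgraph of `G`, and (ii) every vertex outside `W` is covered by a vertex of `W`. -/
def IsRepSupport (H : NatHypergraph) (W : Finset ℕ) (G : SimpleGraph ℕ) : Prop :=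
  W ⊆ H.V ∧ EdgesWithin G W ∧
    (∀ F ∈ H.E, 2 ≤ (F ∩ W).card → ((G.induce ((F ∩ W : Finset ℕ) : Set ℕ)).Connected)) ∧
    (∀ v ∈ H.V \ W, ∃ w ∈ W, H.Covers w v)

namespace NatHypergraph

variable {H : NatHypergraph} {u v : ℕ} {F : Finset ℕ}

lemma erase_mem_delete_edges (hF : F ∈ H.E) (hcard : 2 ≤ (F.erase v).card) :
    F.erase v ∈ (H.delete v).E :=
  Finset.mem_filter.mpr ⟨Finset.mem_image_of_mem _ hF, hcard⟩

lemma AreTwins.mem_iff (htwin : H.AreTwins u v) (hF : F ∈ H.E) : u ∈ F ↔ v ∈ F := by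
  have := congrArg (F ∈ ·) htwin
  simpa [edgesAt, hF] using this

end NatHypergraph

open NatHypergraph

lemma EdgesWithin.sup_edge {G : SimpleGraph ℕ} {W : Finset ℕ} {a b : ℕ} (hG : EdgesWithin G W)
    (ha : a ∈ W) (hb : b ∈ W) : EdgesWithin (G ⊔ SimpleGraph.fromEdgeSet {s(a, b)}) W := by
  rintro x y (hxy | ⟨hxy, -⟩)
  · exact hG x y hxy
  · rcases Sym2.eq_iff.mp hxy with ⟨rfl, rfl⟩ | ⟨rfl, rfl⟩
    exacts [⟨ha, hb⟩, ⟨hb, ha⟩]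

lemma EdgesWithin.mono {G : SimpleGraph ℕ} {W W' : Finset ℕ} (hG : EdgesWithin G W)
    (hWW' : W ⊆ W') : EdgesWithin G W' :=
  fun a b hab => (hG a b hab).imp (@hWW' a) (@hWW' b)

lemma IsSupport.induce_erase_preconnected {H : NatHypergraph} {v : ℕ} {G : SimpleGraph ℕ}
    (hG : IsSupport (H.delete v) G) {F : Finset ℕ} (hF : F ∈ H.E) :
    (G.induce (F.erase v : Set ℕ)).Preconnected := by
  by_cases hcard : 2 ≤ (F.erase v).card
  · exact (hG.2 _ (erase_mem_delete_edges hF hcard)).preconnected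
  · have : Subsingleton (F.erase v : Set ℕ) :=
      Finset.card_le_one_iff_subsingleton_coe.mp (by omega)
    exact SimpleGraph.Preconnected.of_subsingleton

/-- If `u ≠ v` are twins of `H` and `G` is a support for `H − v`
on the vertex set `V ∖ {v}`, then adding `v` with the single edge `{v, u}`
yields a support for `H`. -/
theorem support_add_twin_pendant
    (H : NatHypergraph) (u v : ℕ) (hu : u ∈ H.V) (hv : v ∈ H.V) (huv : u ≠ v)
    (htwin : H.AreTwins u v)
    (G : SimpleGraph ℕ) (hG : IsSupport (H.delete v) G) :
    IsSupport H (G ⊔ SimpleGraph.fromEdgeSet {s(v, u)}) := by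
  set K := G ⊔ SimpleGraph.fromEdgeSet {s(v, u)}
  refine ⟨(hG.1.mono (Finset.erase_subset v H.V)).sup_edge hv hu, fun F hF => ?_⟩
  have hKF : (K.induce (F.erase v : Set ℕ)).Preconnected :=
    (hG.induce_erase_preconnected hF).mono (SimpleGraph.comap_monotone _ le_sup_left)
  by_cases hvF : v ∈ F
  · have huF : u ∈ F.erase v := Finset.mem_erase.mpr ⟨huv, (htwin.mem_iff hF).mpr hvF⟩
    have hadj : K.Adj u v := Or.inr ⟨Sym2.eq_swap, huv⟩
    have hFeq : ((F.erase v : Set ℕ) ∪ {v}) = F := by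
      rw [← Finset.coe_singleton, ← Finset.coe_union, Finset.union_singleton,
        Finset.insert_erase hvF]
    rw [← hFeq]
    exact SimpleGraph.connected_induce_union hKF
      SimpleGraph.Preconnected.of_subsingleton huF rfl hadj
  · rw [Finset.erase_eq_of_notMem hvF] at hKF
    have : Nonempty (F : Set ℕ) :=
      (Finset.card_pos (s := F)).mp (by linarith [H.edge_card F hF]) |>.coe_sort
    exact ⟨hKF⟩
end
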